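/- arXiv:1302.4554 — 8 statements merged into one kernel-verified Lean document; each statement's English description precedes it below -/
import Mathlib

section
/- Let (g, B) be a quadratic Lie algebra and let D be a skew-symmetric derivation of (g, B). Define the double extension ḡ = g ⊕ ℂe ⊕ ℂf with bracket [X,Y]_ḡ = [X,Y]_g + B(D(X),Y)·f, [e,X]_ḡ = D(X), [f, ḡ]_ḡ = 0 for X,Y ∈ g, and bilinear form B̄ extending B with B̄(e,f)=1, B̄(e,e)=B̄(f,f)=B̄(e,g)=B̄(f,g)=0. Then ḡ is a Lie algebra and B̄ is a non-degenerate invariant symmetric bilinear form on ḡ; that is, (ḡ, B̄) is a quadratic Lie algebra. -/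
/-!
Every identity for `ḡ = g ⊕ ℂe ⊕ ℂf` is checked componentwise. The `g`-components reduce to the
Jacobi identity of `g` and the derivation rule for `D`; the `f`-component of the Jacobi identity is
the statement that `ω(X, Y) = B(DX, Y)` is a 2-cocycle on `g`, which follows from invariance of `B`
and skew-symmetry of `D`. Non-degeneracy of `B̄` pairs `e` with `f` and reduces to that of `B`.
-/

section DoubleExtension

variable {R L : Type*} [CommRing R] [LieRing L] [LieAlgebra R L]
  (B : L →ₗ[R] L →ₗ[R] R) (D : L →ₗ[R] L)

/-- The bracket of the double extension, with `(X, a, b)` standing for `X + a • e + b • f`. -/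
def doubleExtensionBracket (u v : L × R × R) : L × R × R :=
  (⁅u.1, v.1⁆ + u.2.1 • D v.1 - v.2.1 • D u.1, 0, B (D u.1) v.1)

def doubleExtensionForm (u v : L × R × R) : R :=
  B u.1 v.1 + u.2.1 * v.2.2 + u.2.2 * v.2.1

theorem derivation_cocycle (hinv : ∀ x y z : L, B ⁅x, y⁆ z = B x ⁅y, z⁆)
    (hder : ∀ x y : L, D ⁅x, y⁆ = ⁅D x, y⁆ + ⁅x, D y⁆) (x y z : L) :
    B (D x) ⁅y, z⁆ = B (D ⁅x, y⁆) z + B (D y) ⁅x, z⁆ := by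
  have hDy : B ⁅x, D y⁆ z = - B (D y) ⁅x, z⁆ := by
    rw [← lie_skew, map_neg, LinearMap.neg_apply, hinv]
  rw [hder, map_add, LinearMap.add_apply, hinv, hDy]
  ring

theorem doubleExtensionBracket_smul_add_left (c : R) (u u' v : L × R × R) :
    doubleExtensionBracket B D (c • u + u') v =
      c • doubleExtensionBracket B D u v + doubleExtensionBracket B D u' v := by
  obtain ⟨x, a, p⟩ := u; obtain ⟨x', a', p'⟩ := u'; obtain ⟨y, b, q⟩ := v
  simp only [doubleExtensionBracket, Prod.smul_mk, Prod.mk_add_mk, smul_eq_mul, Prod.mk.injEq]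
  refine ⟨?_, by ring, by simp only [map_add, map_smul, LinearMap.add_apply,
    LinearMap.smul_apply, smul_eq_mul]⟩
  simp only [add_lie, smul_lie, map_add, map_smul, smul_add, smul_sub, smul_smul]
  module

theorem doubleExtensionBracket_antisymm (hsymm : ∀ x y : L, B x y = B y x)
    (hskew : ∀ x y : L, B (D x) y = - B x (D y)) (u v : L × R × R) :
    doubleExtensionBracket B D u v = - doubleExtensionBracket B D v u := by
  obtain ⟨x, a, p⟩ := u; obtain ⟨y, b, q⟩ := v
  simp only [doubleExtensionBracket, Prod.neg_mk, Prod.mk.injEq]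
  refine ⟨?_, by ring, by rw [hskew, hsymm]⟩
  rw [← lie_skew x y]
  module

theorem doubleExtensionBracket_leibniz (hsymm : ∀ x y : L, B x y = B y x)
    (hinv : ∀ x y z : L, B ⁅x, y⁆ z = B x ⁅y, z⁆)
    (hder : ∀ x y : L, D ⁅x, y⁆ = ⁅D x, y⁆ + ⁅x, D y⁆)
    (hskew : ∀ x y : L, B (D x) y = - B x (D y)) (u v w : L × R × R) :
    doubleExtensionBracket B D u (doubleExtensionBracket B D v w) =
      doubleExtensionBracket B D (doubleExtensionBracket B D u v) w +
        doubleExtensionBracket B D v (doubleExtensionBracket B D u w) := by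
  obtain ⟨x, a, p⟩ := u; obtain ⟨y, b, q⟩ := v; obtain ⟨z, c, r⟩ := w
  simp only [doubleExtensionBracket, Prod.mk_add_mk, Prod.mk.injEq]
  refine ⟨?_, by ring, ?_⟩
  · simp only [map_add, map_sub, map_smul, lie_add, add_lie, lie_sub, sub_lie, lie_smul,
      smul_lie, hder, smul_add, smul_sub, smul_smul, zero_smul, leibniz_lie x y z]
    rw [← lie_skew y (D x)]
    module
  · simp only [map_add, map_sub, map_smul, LinearMap.add_apply, LinearMap.sub_apply,
      LinearMap.smul_apply, smul_eq_mul]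
    linear_combination derivation_cocycle B D hinv hder x y z + b * hskew (D x) z
      - a * hskew (D y) z - c * hsymm (D x) (D y)

theorem doubleExtensionForm_symm (hsymm : ∀ x y : L, B x y = B y x) (u v : L × R × R) :
    doubleExtensionForm B u v = doubleExtensionForm B v u := by
  simp only [doubleExtensionForm, hsymm u.1]
  ring

theorem doubleExtensionForm_nondegenerate (hnondeg : ∀ x : L, (∀ y : L, B x y = 0) → x = 0)
    (u : L × R × R) (hu : ∀ v, doubleExtensionForm B u v = 0) : u = 0 := by
  obtain ⟨x, a, p⟩ := u
  have hx : x = 0 := hnondeg x fun y => by simpa [doubleExtensionForm] using hu (y, 0, 0)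
  have ha : a = 0 := by simpa [doubleExtensionForm] using hu (0, 0, 1)
  have hp : p = 0 := by simpa [doubleExtensionForm] using hu (0, 1, 0)
  simp [hx, ha, hp]

theorem doubleExtensionForm_invariant (hinv : ∀ x y z : L, B ⁅x, y⁆ z = B x ⁅y, z⁆)
    (hskew : ∀ x y : L, B (D x) y = - B x (D y)) (u v w : L × R × R) :
    doubleExtensionForm B (doubleExtensionBracket B D u v) w =
      doubleExtensionForm B u (doubleExtensionBracket B D v w) := by
  simp only [doubleExtensionForm, doubleExtensionBracket, map_add, map_sub, map_smul,
    LinearMap.add_apply, LinearMap.sub_apply, LinearMap.smul_apply, smul_eq_mul]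
  linear_combination hinv u.1 v.1 w.1 - v.2.1 * hskew u.1 w.1 + w.2.1 * hskew u.1 v.1

end DoubleExtension

theorem stmt_4_general (L : Type*) [LieRing L] [LieAlgebra ℂ L]
    (B : L →ₗ[ℂ] L →ₗ[ℂ] ℂ)
    (hsymm : ∀ x y : L, B x y = B y x)
    (hnondeg : ∀ x : L, (∀ y : L, B x y = 0) → x = 0)
    (hinv : ∀ x y z : L, B ⁅x, y⁆ z = B x ⁅y, z⁆)
    (D : L →ₗ[ℂ] L)
    (hder : ∀ x y : L, D ⁅x, y⁆ = ⁅D x, y⁆ + ⁅x, D y⁆)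
    (hskew : ∀ x y : L, B (D x) y = - B x (D y))
    (br : L × ℂ × ℂ → L × ℂ × ℂ → L × ℂ × ℂ)
    (hbr : ∀ u v, br u v =
      (⁅u.1, v.1⁆ + u.2.1 • D v.1 - v.2.1 • D u.1, 0, B (D u.1) v.1))
    (Bb : L × ℂ × ℂ → L × ℂ × ℂ → ℂ)
    (hBb : ∀ u v, Bb u v = B u.1 v.1 + u.2.1 * v.2.2 + u.2.2 * v.2.1) :
    -- the bracket is bilinear
    (∀ (c : ℂ) (u u' v : L × ℂ × ℂ), br (c • u + u') v = c • br u v + br u' v) ∧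
    -- antisymmetric
    (∀ u v, br u v = - br v u) ∧
    -- satisfies the Jacobi identity (Leibniz form)
    (∀ u v w, br u (br v w) = br (br u v) w + br v (br u w)) ∧
    -- B̄ is symmetric
    (∀ u v, Bb u v = Bb v u) ∧
    -- non-degenerate
    (∀ u, (∀ v, Bb u v = 0) → u = 0) ∧
    -- invariant
    (∀ u v w, Bb (br u v) w = Bb u (br v w)) := by
  obtain rfl : br = doubleExtensionBracket B D := funext fun u => funext (hbr u)
  obtain rfl : Bb = doubleExtensionForm B := funext fun u => funext (hBb u)
  exact ⟨doubleExtensionBracket_smul_add_left B D,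
    doubleExtensionBracket_antisymm B D hsymm hskew,
    doubleExtensionBracket_leibniz B D hsymm hinv hder hskew,
    doubleExtensionForm_symm B hsymm,
    doubleExtensionForm_nondegenerate B hnondeg,
    doubleExtensionForm_invariant B D hinv hskew⟩

/-- The one-dimensional double extension of a quadratic Lie algebra `(g,B)`
by a skew-symmetric derivation `D` is again a quadratic Lie algebra.  Elements of
`ḡ = g ⊕ ℂe ⊕ ℂf` are encoded as triples `(X, a, b) = X + a·e + b·f`. -/
theorem stmt_4 (L : Type*) [LieRing L] [LieAlgebra ℂ L] [FiniteDimensional ℂ L]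
    (B : L →ₗ[ℂ] L →ₗ[ℂ] ℂ)
    (hsymm : ∀ x y : L, B x y = B y x)
    (hnondeg : ∀ x : L, (∀ y : L, B x y = 0) → x = 0)
    (hinv : ∀ x y z : L, B ⁅x, y⁆ z = B x ⁅y, z⁆)
    (D : L →ₗ[ℂ] L)
    (hder : ∀ x y : L, D ⁅x, y⁆ = ⁅D x, y⁆ + ⁅x, D y⁆)
    (hskew : ∀ x y : L, B (D x) y = - B x (D y))
    (br : L × ℂ × ℂ → L × ℂ × ℂ → L × ℂ × ℂ)
    (hbr : ∀ u v, br u v =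
      (⁅u.1, v.1⁆ + u.2.1 • D v.1 - v.2.1 • D u.1, 0, B (D u.1) v.1))
    (Bb : L × ℂ × ℂ → L × ℂ × ℂ → ℂ)
    (hBb : ∀ u v, Bb u v = B u.1 v.1 + u.2.1 * v.2.2 + u.2.2 * v.2.1) :
    -- the bracket is bilinear
    (∀ (c : ℂ) (u u' v : L × ℂ × ℂ), br (c • u + u') v = c • br u v + br u' v) ∧
    -- antisymmetric
    (∀ u v, br u v = - br v u) ∧
    -- satisfies the Jacobi identity (Leibniz form)
    (∀ u v w, br u (br v w) = br (br u v) w + br v (br u w)) ∧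
    -- B̄ is symmetric
    (∀ u v, Bb u v = Bb v u) ∧
    -- non-degenerate
    (∀ u, (∀ v, Bb u v = 0) → u = 0) ∧
    -- invariant
    (∀ u v w, Bb (br u v) w = Bb u (br v w)) :=
  stmt_4_general L B hsymm hnondeg hinv D hder hskew br hbr Bb hBb
end

section
/- Every skew-symmetric derivation of the diamond Lie algebra (g₄, B) is an inner derivation. -/
/-!
Write `D` in the basis `X, P, Q, Z`. The Leibniz rule on `[X,P] = P` and `[X,Q] = -Q`, together
with skew-symmetry on the pairs `(X, X)` and `(P, Q)`, forces
`D X = β P + γ Q`, `D P = q P - γ Z`, `D Q = -q Q - β Z`, which is `ad (q X - β P + γ Q)` on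
`X, P, Q`. Since `Z = [P, Q]` and both maps are derivations, they also agree on `Z`.
-/

theorem Module.Basis.sum_repr_fin_four {K M : Type*} [Semiring K] [AddCommMonoid M] [Module K M]
    (b : Module.Basis (Fin 4) K M) (v : M) :
    b.repr v 0 • b 0 + b.repr v 1 • b 1 + b.repr v 2 • b 2 + b.repr v 3 • b 3 = v := by
  rw [← Fin.sum_univ_four (f := fun i => b.repr v i • b i), b.sum_repr]

theorem map_lie_eq_of_eq_lie {K L : Type*} [CommRing K] [LieRing L] [LieAlgebra K L]
    {D : L →ₗ[K] L} (hder : ∀ x y : L, D ⁅x, y⁆ = ⁅D x, y⁆ + ⁅x, D y⁆) {W x y : L}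
    (hx : D x = ⁅W, x⁆) (hy : D y = ⁅W, y⁆) : D ⁅x, y⁆ = ⁅W, ⁅x, y⁆⁆ := by
  rw [hder, hx, hy, leibniz_lie W x y]

section Diamond

variable {K L : Type*} [Field K] [LieRing L] [LieAlgebra K L]

/-- `b 0, b 1, b 2, b 3` are `X, P, Q, Z`. -/
structure IsDiamondBasis (b : Module.Basis (Fin 4) K L) : Prop where
  lie_XP : ⁅b 0, b 1⁆ = b 1
  lie_XQ : ⁅b 0, b 2⁆ = -b 2
  lie_PQ : ⁅b 1, b 2⁆ = b 3
  lie_XZ : ⁅b 0, b 3⁆ = 0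
  lie_PZ : ⁅b 1, b 3⁆ = 0
  lie_QZ : ⁅b 2, b 3⁆ = 0

def IsDiamondForm (b : Module.Basis (Fin 4) K L) (B : L →ₗ[K] L →ₗ[K] K) : Prop :=
  ∀ i j : Fin 4, B (b i) (b j) =
    if (i = 0 ∧ j = 3) ∨ (i = 3 ∧ j = 0) ∨ (i = 1 ∧ j = 2) ∨ (i = 2 ∧ j = 1) then 1 else 0

variable {b : Module.Basis (Fin 4) K L}

theorem IsDiamondForm.apply {B : L →ₗ[K] L →ₗ[K] K} (hB : IsDiamondForm b B) (u v : L) :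
    B u v = b.repr u 0 * b.repr v 3 + b.repr u 3 * b.repr v 0
      + b.repr u 1 * b.repr v 2 + b.repr u 2 * b.repr v 1 := by
  unfold IsDiamondForm at hB
  conv_lhs => rw [← b.sum_repr_fin_four u, ← b.sum_repr_fin_four v]
  simp only [map_add, map_smul, LinearMap.add_apply, LinearMap.smul_apply, smul_eq_mul, hB,
    Fin.reduceEq, Fin.isValue, and_self, and_true, and_false, or_self, or_true, or_false, if_true,
    if_false, mul_zero, mul_one, add_zero, zero_add]
  ring

namespace IsDiamondBasis

theorem lie_PX (hb : IsDiamondBasis b) : ⁅b 1, b 0⁆ = -b 1 := by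
  rw [← lie_skew, hb.lie_XP]

theorem lie_QX (hb : IsDiamondBasis b) : ⁅b 2, b 0⁆ = b 2 := by
  rw [← lie_skew, hb.lie_XQ, neg_neg]

theorem lie_QP (hb : IsDiamondBasis b) : ⁅b 2, b 1⁆ = -b 3 := by
  rw [← lie_skew, hb.lie_PQ]

theorem lie_X (hb : IsDiamondBasis b) (v : L) :
    ⁅b 0, v⁆ = b.repr v 1 • b 1 - b.repr v 2 • b 2 := by
  conv_lhs => rw [← b.sum_repr_fin_four v]
  simp only [lie_add, lie_smul, lie_self, hb.lie_XP, hb.lie_XQ, hb.lie_XZ]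
  module

theorem lie_P (hb : IsDiamondBasis b) (v : L) :
    ⁅b 1, v⁆ = -b.repr v 0 • b 1 + b.repr v 2 • b 3 := by
  conv_lhs => rw [← b.sum_repr_fin_four v]
  simp only [lie_add, lie_smul, lie_self, hb.lie_PX, hb.lie_PQ, hb.lie_PZ]
  module

theorem lie_Q (hb : IsDiamondBasis b) (v : L) :
    ⁅b 2, v⁆ = b.repr v 0 • b 2 - b.repr v 1 • b 3 := by
  conv_lhs => rw [← b.sum_repr_fin_four v]
  simp only [lie_add, lie_smul, lie_self, hb.lie_QX, hb.lie_QP, hb.lie_QZ]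
  module

variable {D : L →ₗ[K] L}

theorem derivation_P_eq (hb : IsDiamondBasis b)
    (hder : ∀ x y : L, D ⁅x, y⁆ = ⁅D x, y⁆ + ⁅x, D y⁆) :
    D (b 1) = (b.repr (D (b 0)) 0 + b.repr (D (b 1)) 1) • b 1 - b.repr (D (b 1)) 2 • b 2
      - b.repr (D (b 0)) 2 • b 3 := by
  have h := hder (b 0) (b 1)
  rw [hb.lie_XP, ← lie_skew (D (b 0)), hb.lie_X, hb.lie_P] at h
  exact h.trans (by module)

theorem derivation_Q_eq (hb : IsDiamondBasis b)
    (hder : ∀ x y : L, D ⁅x, y⁆ = ⁅D x, y⁆ + ⁅x, D y⁆) :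
    D (b 2) = -b.repr (D (b 2)) 1 • b 1 + (b.repr (D (b 0)) 0 + b.repr (D (b 2)) 2) • b 2
      - b.repr (D (b 0)) 1 • b 3 := by
  have h := hder (b 0) (b 2)
  rw [hb.lie_XQ, map_neg, ← lie_skew (D (b 0)), hb.lie_X, hb.lie_Q, neg_eq_iff_eq_neg] at h
  exact h.trans (by module)

theorem exists_skew_derivation_eq [CharZero K] (hb : IsDiamondBasis b)
    {B : L →ₗ[K] L →ₗ[K] K} (hB : IsDiamondForm b B)
    (hder : ∀ x y : L, D ⁅x, y⁆ = ⁅D x, y⁆ + ⁅x, D y⁆)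
    (hskew : ∀ x y : L, B (D x) y = - B x (D y)) :
    ∃ β γ q : K, D (b 0) = β • b 1 + γ • b 2 ∧ D (b 1) = q • b 1 - γ • b 3 ∧
      D (b 2) = -q • b 2 - β • b 3 := by
  have hP := hb.derivation_P_eq hder
  have hQ := hb.derivation_Q_eq hder
  have hXX : b.repr (D (b 0)) 0 = 0 := by
    simpa [CharZero.eq_neg_self_iff] using congr(b.repr $hP 1)
  have hPQ : b.repr (D (b 1)) 2 = 0 := by
    simpa [CharZero.eq_neg_self_iff] using congr(b.repr $hP 2)
  have hQP : b.repr (D (b 2)) 1 = 0 := by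
    simpa [CharZero.eq_neg_self_iff] using congr(b.repr $hQ 1)
  have hXZ : b.repr (D (b 0)) 3 = 0 := by
    simpa [hB.apply, CharZero.eq_neg_self_iff] using hskew (b 0) (b 0)
  have hPP : b.repr (D (b 1)) 1 = -b.repr (D (b 2)) 2 := by
    simpa [hB.apply] using hskew (b 1) (b 2)
  refine ⟨b.repr (D (b 0)) 1, b.repr (D (b 0)) 2, b.repr (D (b 1)) 1, ?_, hP.trans ?_,
    hQ.trans ?_⟩
  · conv_lhs => rw [← b.sum_repr_fin_four (D (b 0)), hXX, hXZ]
    module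
  · rw [hXX, hPQ]
    module
  · rw [hQP, hXX, hPP]
    module

end IsDiamondBasis

end Diamond

/-- Every skew-symmetric derivation of the diamond Lie algebra `(g₄, B)` is
inner.  The basis is `b 0 = X`, `b 1 = P`, `b 2 = Q`, `b 3 = Z` with brackets
`[X,P]=P`, `[X,Q]=−Q`, `[P,Q]=Z` and form `B(X,Z)=B(P,Q)=1`, other pairings zero. -/
theorem stmt_7 (L : Type*) [LieRing L] [LieAlgebra ℂ L]
    (b : Module.Basis (Fin 4) ℂ L)
    (hXP : ⁅b 0, b 1⁆ = b 1) (hXQ : ⁅b 0, b 2⁆ = -(b 2)) (hPQ : ⁅b 1, b 2⁆ = b 3)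
    (hXZ : ⁅b 0, b 3⁆ = 0) (hPZ : ⁅b 1, b 3⁆ = 0) (hQZ : ⁅b 2, b 3⁆ = 0)
    (B : L →ₗ[ℂ] L →ₗ[ℂ] ℂ)
    (hB : ∀ i j : Fin 4, B (b i) (b j) =
      if (i = 0 ∧ j = 3) ∨ (i = 3 ∧ j = 0) ∨ (i = 1 ∧ j = 2) ∨ (i = 2 ∧ j = 1)
      then 1 else 0)
    (D : L →ₗ[ℂ] L)
    (hder : ∀ x y : L, D ⁅x, y⁆ = ⁅D x, y⁆ + ⁅x, D y⁆)
    (hskew : ∀ x y : L, B (D x) y = - B x (D y)) :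
    ∃ W : L, ∀ v : L, D v = ⁅W, v⁆ := by
  have hb : IsDiamondBasis b := ⟨hXP, hXQ, hPQ, hXZ, hPZ, hQZ⟩
  obtain ⟨β, γ, q, hX, hP, hQ⟩ := hb.exists_skew_derivation_eq hB hder hskew
  set W := q • b 0 - β • b 1 + γ • b 2
  have hWX : D (b 0) = ⁅W, b 0⁆ := by
    simp only [W, hX, add_lie, sub_lie, smul_lie, lie_self, hb.lie_PX, hb.lie_QX]
    module
  have hWP : D (b 1) = ⁅W, b 1⁆ := by
    simp only [W, hP, add_lie, sub_lie, smul_lie, lie_self, hXP, hb.lie_QP]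
    module
  have hWQ : D (b 2) = ⁅W, b 2⁆ := by
    simp only [W, hQ, add_lie, sub_lie, smul_lie, lie_self, hXQ, hPQ]
    module
  have hWZ : D (b 3) = ⁅W, b 3⁆ := by
    rw [← hPQ]
    exact map_lie_eq_of_eq_lie hder hWP hWQ
  have hD : D = LieModule.toEnd ℂ L L W := b.ext fun i => by
    fin_cases i <;> assumption
  exact ⟨W, fun v => by rw [hD, LieModule.toEnd_apply_apply]⟩
end

section
/- Let g be a Lie algebra and θ : g × g → g* a skew-symmetric 2-cocycle that is cyclic, i.e., θ(X,Y)(Z) = θ(Y,Z)(X) for all X,Y,Z ∈ g. Then the T*-extension T*_θ(g) = g ⊕ g* with bracket [X+f, Y+g] = [X,Y] + ad*(X)(g) − ad*(Y)(f) + θ(X,Y) is a quadratic Lie algebra with the invariant bilinear form B(X+f, Y+g) = f(Y) + g(X). -/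
/-!
Each identity is checked componentwise, the `g*`-component evaluated at a test vector.
There the Jacobi identity is exactly the cocycle condition, after skew-symmetry of `θ`
rewrites `θ(X,[Y,Z])` as `-θ([Y,Z],X)`. Invariance of `B` is where cyclicity enters:
`B([u,v],w) - B(u,[v,w])` reduces to `θ(X,Y)(Z) - θ(Y,Z)(X)`, and non-degeneracy holds
because vectors of a projective module are separated by the dual.
-/

namespace TStarExtension

variable {R L : Type*} [CommRing R] [LieRing L] [LieAlgebra R L] {θ : L → L → Module.Dual R L}

theorem apply_zero_left (hθlin : ∀ (a : R) (x x' y : L), θ (a • x + x') y = a • θ x y + θ x' y)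
    (y : L) : θ 0 y = 0 := by
  simpa using hθlin 1 0 0 y

theorem apply_neg_left (hθlin : ∀ (a : R) (x x' y : L), θ (a • x + x') y = a • θ x y + θ x' y)
    (x y z : L) : θ (-x) y z = -θ x y z := by
  simpa [apply_zero_left hθlin] using congrArg (· z) (hθlin (-1) x 0 y)

variable {br : L × Module.Dual R L → L × Module.Dual R L → L × Module.Dual R L}
  (hbr1 : ∀ u v, (br u v).1 = ⁅u.1, v.1⁆)
  (hbr2 : ∀ u v (w : L), (br u v).2 w = - v.2 ⁅u.1, w⁆ + u.2 ⁅v.1, w⁆ + θ u.1 v.1 w)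
include hbr1 hbr2

theorem bracket_add_smul_left
    (hθlin : ∀ (a : R) (x x' y : L), θ (a • x + x') y = a • θ x y + θ x' y)
    (c : R) (u u' v : L × Module.Dual R L) : br (c • u + u') v = c • br u v + br u' v := by
  refine Prod.ext ?_ (LinearMap.ext fun w => ?_)
  · simp only [hbr1, Prod.fst_add, Prod.smul_fst, add_lie, smul_lie]
  · simp only [Prod.snd_add, Prod.smul_snd, LinearMap.add_apply, LinearMap.smul_apply, hbr2,
      Prod.fst_add, Prod.smul_fst, add_lie, smul_lie, map_add, map_smul, smul_eq_mul, hθlin]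
    ring

theorem bracket_skew (hθskew : ∀ x y, θ x y = - θ y x) (u v : L × Module.Dual R L) :
    br u v = - br v u := by
  refine Prod.ext ?_ (LinearMap.ext fun w => ?_)
  · rw [Prod.fst_neg, hbr1, hbr1, lie_skew]
  · simp only [Prod.snd_neg, LinearMap.neg_apply, hbr2, hθskew u.1 v.1]
    ring

theorem bracket_leibniz (hθskew : ∀ x y, θ x y = - θ y x)
    (hθlin : ∀ (a : R) (x x' y : L), θ (a • x + x') y = a • θ x y + θ x' y)
    (hcocycle : ∀ x y z w : L,
      θ x y ⁅z, w⁆ + θ ⁅x, y⁆ z w + θ y z ⁅x, w⁆ + θ ⁅y, z⁆ x w +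
        θ z x ⁅y, w⁆ + θ ⁅z, x⁆ y w = 0)
    (u v w : L × Module.Dual R L) : br u (br v w) = br (br u v) w + br v (br u w) := by
  refine Prod.ext ?_ (LinearMap.ext fun z => ?_)
  · simp only [Prod.fst_add, hbr1, lie_lie, sub_add_cancel]
  · simp only [Prod.snd_add, LinearMap.add_apply, hbr2, hbr1, lie_lie, map_sub]
    have skew_u_vw : θ u.1 ⁅v.1, w.1⁆ z = - θ ⁅v.1, w.1⁆ u.1 z := by rw [hθskew]; rfl
    have skew_v_uw : θ v.1 ⁅u.1, w.1⁆ z = θ ⁅w.1, u.1⁆ v.1 z := by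
      rw [hθskew, ← lie_skew w.1 u.1, LinearMap.neg_apply, apply_neg_left hθlin]
    have skew_u_w : θ u.1 w.1 ⁅v.1, z⁆ = - θ w.1 u.1 ⁅v.1, z⁆ := by rw [hθskew]; rfl
    linear_combination -hcocycle u.1 v.1 w.1 z + skew_u_vw - skew_v_uw + skew_u_w

omit hbr1 hbr2

variable {Bb : L × Module.Dual R L → L × Module.Dual R L → R}
  (hBb : ∀ u v, Bb u v = u.2 v.1 + v.2 u.1)
include hBb

theorem form_symm (u v : L × Module.Dual R L) : Bb u v = Bb v u := by
  rw [hBb, hBb, add_comm]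

theorem form_nondegenerate [Module.Projective R L] (u : L × Module.Dual R L)
    (hu : ∀ v, Bb u v = 0) : u = 0 := by
  have h2 : u.2 = 0 := LinearMap.ext fun y => by simpa [hBb] using hu (y, 0)
  have h1 : u.1 = 0 :=
    (Module.forall_dual_apply_eq_zero_iff R u.1).mp fun φ => by simpa [hBb, h2] using hu (0, φ)
  exact Prod.ext h1 h2

include hbr1 hbr2 in
theorem form_invariant (hcyclic : ∀ x y z : L, θ x y z = θ y z x)
    (u v w : L × Module.Dual R L) : Bb (br u v) w = Bb u (br v w) := by
  simp only [hBb, hbr1, hbr2]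
  rw [hcyclic u.1 v.1 w.1, ← lie_skew v.1 u.1, map_neg, ← lie_skew w.1 u.1, map_neg]
  ring

end TStarExtension

open TStarExtension in
theorem stmt_9_general (L : Type*) [LieRing L] [LieAlgebra ℂ L]
    (θ : L → L → Module.Dual ℂ L)
    (hθskew : ∀ x y, θ x y = - θ y x)
    (hθlin : ∀ (a : ℂ) (x x' y : L), θ (a • x + x') y = a • θ x y + θ x' y)
    (hcocycle : ∀ x y z w : L,
      θ x y ⁅z, w⁆ + θ ⁅x, y⁆ z w + θ y z ⁅x, w⁆ + θ ⁅y, z⁆ x w +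
        θ z x ⁅y, w⁆ + θ ⁅z, x⁆ y w = 0)
    (hcyclic : ∀ x y z : L, θ x y z = θ y z x)
    (br : L × Module.Dual ℂ L → L × Module.Dual ℂ L → L × Module.Dual ℂ L)
    (hbr1 : ∀ u v, (br u v).1 = ⁅u.1, v.1⁆)
    (hbr2 : ∀ u v (w : L),
      (br u v).2 w = - v.2 ⁅u.1, w⁆ + u.2 ⁅v.1, w⁆ + θ u.1 v.1 w)
    (Bb : L × Module.Dual ℂ L → L × Module.Dual ℂ L → ℂ)
    (hBb : ∀ u v, Bb u v = u.2 v.1 + v.2 u.1) :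
    -- Lie algebra structure
    (∀ (c : ℂ) (u u' v), br (c • u + u') v = c • br u v + br u' v) ∧
    (∀ u v, br u v = - br v u) ∧
    (∀ u v w, br u (br v w) = br (br u v) w + br v (br u w)) ∧
    -- B is symmetric, non-degenerate and invariant
    (∀ u v, Bb u v = Bb v u) ∧
    (∀ u, (∀ v, Bb u v = 0) → u = 0) ∧
    (∀ u v w, Bb (br u v) w = Bb u (br v w)) :=
  ⟨bracket_add_smul_left hbr1 hbr2 hθlin, bracket_skew hbr1 hbr2 hθskew,
    bracket_leibniz hbr1 hbr2 hθskew hθlin hcocycle, form_symm hBb, form_nondegenerate hBb,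
    form_invariant hbr1 hbr2 hBb hcyclic⟩

/-- If `θ` is moreover cyclic (`θ(X,Y)(Z) = θ(Y,Z)(X)`), then the
`T*`-extension `T*_θ(g) = g ⊕ g*` is a quadratic Lie algebra with the invariant form
`B(X+f, Y+g) = f(Y) + g(X)`. -/
theorem stmt_9 (L : Type*) [LieRing L] [LieAlgebra ℂ L] [FiniteDimensional ℂ L]
    (θ : L → L → Module.Dual ℂ L)
    (hθskew : ∀ x y, θ x y = - θ y x)
    (hθlin : ∀ (a : ℂ) (x x' y : L), θ (a • x + x') y = a • θ x y + θ x' y)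
    (hcocycle : ∀ x y z w : L,
      θ x y ⁅z, w⁆ + θ ⁅x, y⁆ z w + θ y z ⁅x, w⁆ + θ ⁅y, z⁆ x w +
        θ z x ⁅y, w⁆ + θ ⁅z, x⁆ y w = 0)
    (hcyclic : ∀ x y z : L, θ x y z = θ y z x)
    (br : L × Module.Dual ℂ L → L × Module.Dual ℂ L → L × Module.Dual ℂ L)
    (hbr1 : ∀ u v, (br u v).1 = ⁅u.1, v.1⁆)
    (hbr2 : ∀ u v (w : L),
      (br u v).2 w = - v.2 ⁅u.1, w⁆ + u.2 ⁅v.1, w⁆ + θ u.1 v.1 w)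
    (Bb : L × Module.Dual ℂ L → L × Module.Dual ℂ L → ℂ)
    (hBb : ∀ u v, Bb u v = u.2 v.1 + v.2 u.1) :
    -- Lie algebra structure
    (∀ (c : ℂ) (u u' v), br (c • u + u') v = c • br u v + br u' v) ∧
    (∀ u v, br u v = - br v u) ∧
    (∀ u v w, br u (br v w) = br (br u v) w + br v (br u w)) ∧
    -- B is symmetric, non-degenerate and invariant
    (∀ u v, Bb u v = Bb v u) ∧
    (∀ u, (∀ v, Bb u v = 0) → u = 0) ∧
    (∀ u v w, Bb (br u v) w = Bb u (br v w)) :=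
  stmt_9_general L θ hθskew hθlin hcocycle hcyclic br hbr1 hbr2 Bb hBb
end

section
/- Let g be a Lie algebra with nonzero center and θ a cyclic 2-cocycle of g. Suppose there exist a nonzero central element X ∈ Z(g) and a nonzero scalar a ∈ ℂ such that θ(X,Y) = a·X*∘ad(Y) for all Y ∈ g, where X* is a linear form with X*(X) = 1 (the dual form of X relative to a basis). Then in the T*-extension T*_θ(g), the element X − aX* is central, and B(X − aX*, X − aX*) = −2a ≠ 0; hence T*_θ(g) is decomposable. -/
/-!
The element `e = X − aX*` is central in `T*_θ(g)`: its `g`-part `X` is central in `g`, and the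
two remaining terms of `[e, Y + f]`, namely `−a X* ∘ ad(Y)` coming from `ad*(Y)(−aX*)` and
`θ(X, Y) = a X* ∘ ad(Y)`, cancel. Since `B(e, e) = −2a ≠ 0`, the line `ℂ e` is a non-degenerate
ideal, and it is proper because `X*` does not lie in it.
-/

def IsDecomposable {K M : Type*} [CommRing K] [AddCommGroup M] [Module K M]
    (br : M → M → M) (Bb : M → M → K) : Prop :=
  ∃ U : Submodule K M, U ≠ ⊥ ∧ U ≠ ⊤ ∧
    (∀ p ∈ U, ∀ v, br p v ∈ U ∧ br v p ∈ U) ∧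
    (∀ p ∈ U, (∀ q ∈ U, Bb p q = 0) → p = 0)

theorem isDecomposable_of_central {K M : Type*} [CommRing K] [NoZeroDivisors K]
    [AddCommGroup M] [Module K M] {br : M → M → M} {Bb : M → M → K} (e : M)
    (hcentral : ∀ (c : K) v, br (c • e) v = 0 ∧ br v (c • e) = 0)
    (hBb : ∀ c : K, Bb (c • e) e = c * Bb e e) (he : Bb e e ≠ 0)
    (hspan : Submodule.span K {e} ≠ ⊤) :
    IsDecomposable br Bb := by
  have he_ne : e ≠ 0 := by
    rintro rfl
    exact he (by simpa using hBb 0)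
  refine ⟨Submodule.span K {e}, by simpa using he_ne, hspan, ?_, ?_⟩
  · rintro p hp v
    obtain ⟨c, rfl⟩ := Submodule.mem_span_singleton.mp hp
    rw [(hcentral c v).1, (hcentral c v).2]
    exact ⟨Submodule.zero_mem _, Submodule.zero_mem _⟩
  · rintro p hp hnull
    obtain ⟨c, rfl⟩ := Submodule.mem_span_singleton.mp hp
    have hc : c * Bb e e = 0 := by
      rw [← hBb]
      exact hnull e (Submodule.mem_span_singleton_self e)
    rw [(mul_eq_zero.mp hc).resolve_right he, zero_smul]

theorem span_singleton_prod_dual_ne_top {K L : Type*} [CommRing K] [Nontrivial K]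
    [AddCommGroup L] [Module K L]
    {X : L} {Xstar : Module.Dual K L} (hXstar : Xstar X = 1) (f : Module.Dual K L) :
    Submodule.span K {(X, f)} ≠ ⊤ := by
  intro htop
  have hmem : ((0 : L), Xstar) ∈ Submodule.span K {(X, f)} := htop ▸ Submodule.mem_top
  obtain ⟨c, hc⟩ := Submodule.mem_span_singleton.mp hmem
  obtain ⟨hcX, hcf⟩ := Prod.ext_iff.mp hc
  have hc0 : c = 0 := by simpa [hXstar] using congrArg Xstar hcX
  simp only [hc0, zero_smul] at hcf
  simp [← hcf] at hXstar

/-- Cyclicity moves every argument of `θ` into the linear third slot. -/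
theorem cyclic_smul_left {K L : Type*} [CommRing K] [AddCommGroup L] [Module K L]
    {θ : L → L → Module.Dual K L} (hcyclic : ∀ x y z : L, θ x y z = θ y z x)
    (c : K) (x y : L) : θ (c • x) y = c • θ x y := by
  ext w
  rw [hcyclic, LinearMap.smul_apply, map_smul, ← hcyclic, ← hcyclic]

theorem tStar_central_smul {K L : Type*} [CommRing K] [LieRing L] [LieAlgebra K L]
    {θ : L → L → Module.Dual K L}
    (hcyclic : ∀ x y z : L, θ x y z = θ y z x)
    {X : L} (hXcentral : ∀ y : L, ⁅X, y⁆ = 0) {a : K} {Xstar : Module.Dual K L}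
    (hθX : ∀ y w : L, θ X y w = a * Xstar ⁅y, w⁆)
    {br : L × Module.Dual K L → L × Module.Dual K L → L × Module.Dual K L}
    (hbr1 : ∀ u v, (br u v).1 = ⁅u.1, v.1⁆)
    (hbr2 : ∀ u v (w : L),
      (br u v).2 w = - v.2 ⁅u.1, w⁆ + u.2 ⁅v.1, w⁆ + θ u.1 v.1 w)
    (c : K) (v : L × Module.Dual K L) :
    br (c • (X, -(a • Xstar))) v = 0 ∧ br v (c • (X, -(a • Xstar))) = 0 := by
  constructor <;> refine Prod.ext ?_ (LinearMap.ext fun w => ?_)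
  · simp [hbr1, hXcentral]
  · simp only [hbr2, Prod.smul_fst, Prod.smul_snd, smul_lie, hXcentral, cyclic_smul_left hcyclic,
      LinearMap.smul_apply, LinearMap.neg_apply, hθX, smul_eq_mul, Prod.snd_zero,
      LinearMap.zero_apply, map_zero, smul_zero]
    ring
  · simp [hbr1, ← lie_skew _ X, hXcentral]
  · simp only [hbr2, Prod.smul_fst, Prod.smul_snd, smul_lie, hXcentral, hcyclic v.1,
      cyclic_smul_left hcyclic, LinearMap.smul_apply, LinearMap.neg_apply, hθX, smul_eq_mul,
      Prod.snd_zero, LinearMap.zero_apply, map_zero, smul_zero]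
    rw [← lie_skew, map_neg]
    ring

theorem stmt_10_general (L : Type*) [LieRing L] [LieAlgebra ℂ L]
    (θ : L → L → Module.Dual ℂ L)
    (hcyclic : ∀ x y z : L, θ x y z = θ y z x)
    (X : L) (hXcentral : ∀ y : L, ⁅X, y⁆ = 0)
    (a : ℂ) (ha : a ≠ 0)
    (Xstar : Module.Dual ℂ L) (hXstar : Xstar X = 1)
    (hθX : ∀ y w : L, θ X y w = a * Xstar ⁅y, w⁆)
    (br : L × Module.Dual ℂ L → L × Module.Dual ℂ L → L × Module.Dual ℂ L)
    (hbr1 : ∀ u v, (br u v).1 = ⁅u.1, v.1⁆)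
    (hbr2 : ∀ u v (w : L),
      (br u v).2 w = - v.2 ⁅u.1, w⁆ + u.2 ⁅v.1, w⁆ + θ u.1 v.1 w)
    (Bb : L × Module.Dual ℂ L → L × Module.Dual ℂ L → ℂ)
    (hBb : ∀ u v, Bb u v = u.2 v.1 + v.2 u.1) :
    -- `X − aX*` is central in the T*-extension
    (∀ v, br (X, -(a • Xstar)) v = 0) ∧ (∀ v, br v (X, -(a • Xstar)) = 0) ∧
    -- `B(X − aX*, X − aX*) = −2a`
    Bb (X, -(a • Xstar)) (X, -(a • Xstar)) = -(2 * a) ∧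
    -- hence `T*_θ(g)` is decomposable
    (∃ U : Submodule ℂ (L × Module.Dual ℂ L),
      U ≠ ⊥ ∧ U ≠ ⊤ ∧
      (∀ p ∈ U, ∀ v, br p v ∈ U ∧ br v p ∈ U) ∧
      (∀ p ∈ U, (∀ q ∈ U, Bb p q = 0) → p = 0)) := by
  have hcentral := tStar_central_smul hcyclic hXcentral hθX hbr1 hbr2
  have hBee : Bb (X, -(a • Xstar)) (X, -(a • Xstar)) = -(2 * a) := by
    simp only [hBb, LinearMap.neg_apply, LinearMap.smul_apply, hXstar, smul_eq_mul, mul_one]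
    ring
  refine ⟨fun v => by simpa using (hcentral 1 v).1, fun v => by simpa using (hcentral 1 v).2,
    hBee, isDecomposable_of_central _ hcentral (fun c => ?_) ?_
      (span_singleton_prod_dual_ne_top hXstar _)⟩
  · simp only [hBb, Prod.smul_fst, Prod.smul_snd, map_smul, LinearMap.smul_apply, smul_eq_mul]
    ring
  · rw [hBee]
    simpa using ha

/-- Let `g` have a nonzero central element `X` and `θ` be a cyclic
2-cocycle with `θ(X,Y) = a·X* ∘ ad(Y)` for all `Y`, with `a ≠ 0` and `X*(X) = 1`.
Then in `T*_θ(g)` the element `X − aX*` is central, `B(X − aX*, X − aX*) = −2a ≠ 0`,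
and hence `T*_θ(g)` is decomposable. -/
theorem stmt_10 (L : Type*) [LieRing L] [LieAlgebra ℂ L] [FiniteDimensional ℂ L]
    (θ : L → L → Module.Dual ℂ L)
    (hθskew : ∀ x y, θ x y = - θ y x)
    (hθlin : ∀ (a : ℂ) (x x' y : L), θ (a • x + x') y = a • θ x y + θ x' y)
    (hcocycle : ∀ x y z w : L,
      θ x y ⁅z, w⁆ + θ ⁅x, y⁆ z w + θ y z ⁅x, w⁆ + θ ⁅y, z⁆ x w +
        θ z x ⁅y, w⁆ + θ ⁅z, x⁆ y w = 0)
    (hcyclic : ∀ x y z : L, θ x y z = θ y z x)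
    (X : L) (hXne : X ≠ 0) (hXcentral : ∀ y : L, ⁅X, y⁆ = 0)
    (a : ℂ) (ha : a ≠ 0)
    (Xstar : Module.Dual ℂ L) (hXstar : Xstar X = 1)
    (hθX : ∀ y w : L, θ X y w = a * Xstar ⁅y, w⁆)
    (br : L × Module.Dual ℂ L → L × Module.Dual ℂ L → L × Module.Dual ℂ L)
    (hbr1 : ∀ u v, (br u v).1 = ⁅u.1, v.1⁆)
    (hbr2 : ∀ u v (w : L),
      (br u v).2 w = - v.2 ⁅u.1, w⁆ + u.2 ⁅v.1, w⁆ + θ u.1 v.1 w)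
    (Bb : L × Module.Dual ℂ L → L × Module.Dual ℂ L → ℂ)
    (hBb : ∀ u v, Bb u v = u.2 v.1 + v.2 u.1) :
    -- `X − aX*` is central in the T*-extension
    (∀ v, br (X, -(a • Xstar)) v = 0) ∧ (∀ v, br v (X, -(a • Xstar)) = 0) ∧
    -- `B(X − aX*, X − aX*) = −2a`
    Bb (X, -(a • Xstar)) (X, -(a • Xstar)) = -(2 * a) ∧
    -- hence `T*_θ(g)` is decomposable
    (∃ U : Submodule ℂ (L × Module.Dual ℂ L),
      U ≠ ⊥ ∧ U ≠ ⊤ ∧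
      (∀ p ∈ U, ∀ v, br p v ∈ U ∧ br v p ∈ U) ∧
      (∀ p ∈ U, (∀ q ∈ U, Bb p q = 0) → p = 0)) :=
  stmt_10_general L θ hcyclic X hXcentral a ha Xstar hXstar hθX br hbr1 hbr2 Bb hBb
end

section
/- Let h₃ be the 3-dimensional Heisenberg Lie algebra with basis {X,Y,Z} and [X,Y]=Z, and let θ be any cyclic 2-cocycle of h₃. Then there exists λ ∈ ℂ such that θ(X,Y) = λZ*, θ(Y,Z) = λX*, θ(Z,X) = λY*, where {X*,Y*,Z*} is the dual basis. -/
/-!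
A skew-symmetric, cyclic `θ` is the same as an alternating trilinear form `(x, y, z) ↦ θ x y z`.
So `θ x y` vanishes on `x` and on `y`, and on a three-dimensional space `θ (b i) (b j)` is a
multiple of the dual vector of the remaining basis element, with coefficient
`θ (b 0) (b 1) (b 2)` in each case by cyclicity.
-/

namespace Module.Basis

theorem eq_apply_smul_dualBasis_of_apply_eq_zero {ι R M : Type*} [CommRing R] [AddCommGroup M]
    [Module R M] [DecidableEq ι] [Finite ι] (b : Basis ι R M) {f : Module.Dual R M} {i : ι}
    (hf : ∀ j ≠ i, f (b j) = 0) : f = f (b i) • b.dualBasis i := by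
  refine b.ext fun j => ?_
  by_cases hji : j = i
  · simp [hji]
  · simp [hf j hji, hji]

end Module.Basis

section CyclicSkew

variable {R M : Type*} [CommRing R] [IsAddTorsionFree R] [AddCommGroup M] [Module R M]
  {θ : M → M → Module.Dual R M}

theorem apply_left_eq_zero_of_cyclic_of_skew (hskew : ∀ x y, θ x y = -θ y x)
    (hcyclic : ∀ x y z, θ x y z = θ y z x) (x y : M) : θ x y x = 0 :=
  self_eq_neg.mp <| (hcyclic x y x).trans <| by rw [hskew y x, LinearMap.neg_apply]

theorem apply_right_eq_zero_of_cyclic_of_skew (hskew : ∀ x y, θ x y = -θ y x)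
    (hcyclic : ∀ x y z, θ x y z = θ y z x) (x y : M) : θ x y y = 0 := by
  rw [hskew, LinearMap.neg_apply, apply_left_eq_zero_of_cyclic_of_skew hskew hcyclic, neg_zero]

end CyclicSkew

theorem stmt_12_general (L : Type*) [LieRing L] [LieAlgebra ℂ L]
    (b : Module.Basis (Fin 3) ℂ L)
    (θ : L → L → Module.Dual ℂ L)
    (hθskew : ∀ x y, θ x y = - θ y x)
    (hcyclic : ∀ x y z : L, θ x y z = θ y z x) :
    ∃ lam : ℂ,
      θ (b 0) (b 1) = lam • b.dualBasis 2 ∧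
      θ (b 1) (b 2) = lam • b.dualBasis 0 ∧
      θ (b 2) (b 0) = lam • b.dualBasis 1 := by
  have hleft := apply_left_eq_zero_of_cyclic_of_skew hθskew hcyclic
  have hright := apply_right_eq_zero_of_cyclic_of_skew hθskew hcyclic
  have hcomplement : ∀ i j k : Fin 3, i ≠ j → j ≠ k → k ≠ i →
      θ (b i) (b j) = θ (b i) (b j) (b k) • b.dualBasis k := by
    intro i j k hij hjk hki
    refine b.eq_apply_smul_dualBasis_of_apply_eq_zero fun l hlk => ?_
    obtain rfl | rfl : l = i ∨ l = j := by omega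
    · exact hleft _ _
    · exact hright _ _
  refine ⟨θ (b 0) (b 1) (b 2), hcomplement 0 1 2 (by decide) (by decide) (by decide), ?_, ?_⟩
  · rw [hcomplement 1 2 0 (by decide) (by decide) (by decide), ← hcyclic]
  · rw [hcomplement 2 0 1 (by decide) (by decide) (by decide), ← hcyclic, ← hcyclic]

/-- Every cyclic 2-cocycle `θ` of the 3-dimensional Heisenberg Lie algebra
`h₃` (basis `X = b 0`, `Y = b 1`, `Z = b 2`, `[X,Y] = Z`) satisfies
`θ(X,Y) = λZ*`, `θ(Y,Z) = λX*`, `θ(Z,X) = λY*` for some `λ ∈ ℂ`. -/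
theorem stmt_12 (L : Type*) [LieRing L] [LieAlgebra ℂ L]
    (b : Module.Basis (Fin 3) ℂ L)
    (hXY : ⁅b 0, b 1⁆ = b 2) (hXZ : ⁅b 0, b 2⁆ = 0) (hYZ : ⁅b 1, b 2⁆ = 0)
    (θ : L → L → Module.Dual ℂ L)
    (hθskew : ∀ x y, θ x y = - θ y x)
    (hθlin : ∀ (a : ℂ) (x x' y : L), θ (a • x + x') y = a • θ x y + θ x' y)
    (hcocycle : ∀ x y z w : L,
      θ x y ⁅z, w⁆ + θ ⁅x, y⁆ z w + θ y z ⁅x, w⁆ + θ ⁅y, z⁆ x w +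
        θ z x ⁅y, w⁆ + θ ⁅z, x⁆ y w = 0)
    (hcyclic : ∀ x y z : L, θ x y z = θ y z x) :
    ∃ lam : ℂ,
      θ (b 0) (b 1) = lam • b.dualBasis 2 ∧
      θ (b 1) (b 2) = lam • b.dualBasis 0 ∧
      θ (b 2) (b 0) = lam • b.dualBasis 1 :=
  stmt_12_general L b θ hθskew hcyclic
end

section
/- Let g be a Lie algebra, (h, B_h) a symplectic vector space, and ψ : g → End(h) a Lie algebra homomorphism with B_h(ψ(X)(Y),Z) = −B_h(Y,ψ(X)(Z)) for all X ∈ g, Y,Z ∈ h. Define φ : h × h → g* by φ(F,G)(Z) = B_h(ψ(Z)(F), G). Then the ℤ₂-graded vector space ḡ with even part g ⊕ g* and odd part h, equipped with the bracket [X+f+F, Y+g+G] = [X,Y] + ad*(X)(g) − ad*(Y)(f) + ψ(X)(G) − ψ(Y)(F) + φ(F,G), is a Lie superalgebra, and the even, supersymmetric bilinear form B̄(X+f+F, Y+g+G) = f(Y) + g(X) + B_h(F,G) is non-degenerate and invariant; that is, (ḡ, B̄) is a quadratic Lie superalgebra. -/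
/-- Gluing `g*` and a symplectic vector space `(h, B_h)` to a Lie algebra
`g` yields a quadratic Lie superalgebra `ḡ` with even part `g ⊕ g*` and odd part `h`.
Elements are encoded as triples `(X, f, F)`; `(X, f, 0)` is even and `(0, 0, F)` is odd.
The conclusions state that the bracket is bilinear, super-antisymmetric, satisfies the
super Jacobi identity, and that `B̄` is even, supersymmetric, non-degenerate and
invariant. -/
theorem stmt_15 (L : Type*) [LieRing L] [LieAlgebra ℂ L] [FiniteDimensional ℂ L]
    (H : Type*) [AddCommGroup H] [Module ℂ H] [FiniteDimensional ℂ H]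
    (Bh : H →ₗ[ℂ] H →ₗ[ℂ] ℂ)
    (halt : ∀ u v : H, Bh u v = - Bh v u)
    (hBhnondeg : ∀ u : H, (∀ v : H, Bh u v = 0) → u = 0)
    (ψ : L →ₗ[ℂ] Module.End ℂ H)
    (hψ : ∀ x y : L, ψ ⁅x, y⁆ = ψ x * ψ y - ψ y * ψ x)
    (hskew : ∀ (x : L) (Y Z : H), Bh (ψ x Y) Z = - Bh Y (ψ x Z))
    (br : L × Module.Dual ℂ L × H → L × Module.Dual ℂ L × H → L × Module.Dual ℂ L × H)
    (hbr1 : ∀ u v, (br u v).1 = ⁅u.1, v.1⁆)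
    (hbr2 : ∀ u v (w : L),
      (br u v).2.1 w = - v.2.1 ⁅u.1, w⁆ + u.2.1 ⁅v.1, w⁆ + Bh (ψ w u.2.2) v.2.2)
    (hbr3 : ∀ u v, (br u v).2.2 = ψ u.1 v.2.2 - ψ v.1 u.2.2)
    (Bb : L × Module.Dual ℂ L × H → L × Module.Dual ℂ L × H → ℂ)
    (hBb : ∀ u v, Bb u v = u.2.1 v.1 + v.2.1 u.1 + Bh u.2.2 v.2.2) :
    -- the bracket is bilinear
    (∀ (c : ℂ) (u u' v), br (c • u + u') v = c • br u v + br u' v) ∧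
    (∀ (c : ℂ) (u v v'), br u (c • v + v') = c • br u v + br u v') ∧
    -- super-antisymmetry
    (∀ u v, (u.2.2 = 0 ∨ v.2.2 = 0) → br u v = - br v u) ∧
    (∀ u v, (u.1 = 0 ∧ u.2.1 = 0) → (v.1 = 0 ∧ v.2.1 = 0) → br u v = br v u) ∧
    -- super Jacobi identity (graded Leibniz form)
    (∀ u v w, (u.2.2 = 0 ∨ v.2.2 = 0) →
      br u (br v w) = br (br u v) w + br v (br u w)) ∧
    (∀ u v w, (u.1 = 0 ∧ u.2.1 = 0) → (v.1 = 0 ∧ v.2.1 = 0) →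
      br u (br v w) = br (br u v) w - br v (br u w)) ∧
    -- B̄ is even
    (∀ u v, u.2.2 = 0 → (v.1 = 0 ∧ v.2.1 = 0) → Bb u v = 0 ∧ Bb v u = 0) ∧
    -- supersymmetric
    (∀ u v, (u.2.2 = 0 ∨ v.2.2 = 0) → Bb u v = Bb v u) ∧
    (∀ u v, (u.1 = 0 ∧ u.2.1 = 0) → (v.1 = 0 ∧ v.2.1 = 0) → Bb u v = - Bb v u) ∧
    -- non-degenerate
    (∀ u, (∀ v, Bb u v = 0) → u = 0) ∧
    -- invariant
    (∀ u v w, Bb (br u v) w = Bb u (br v w)) := by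
  have Bsym : ∀ (x : L) (A B : H), Bh (ψ x A) B = Bh (ψ x B) A := by
    intro x A B; rw [hskew, halt]; ring
  have ext3 : ∀ p q : L × Module.Dual ℂ L × H,
      p.1 = q.1 → (∀ t, p.2.1 t = q.2.1 t) → p.2.2 = q.2.2 → p = q := by
    rintro ⟨a, b, c⟩ ⟨a', b', c'⟩ h1 h2 h3
    simp only at h1 h2 h3
    exact Prod.ext h1 (Prod.ext (LinearMap.ext h2) h3)
  refine ⟨?_, ?_, ?_, ?_, ?_, ?_, ?_, ?_, ?_, ?_, ?_⟩
  · -- left bilinearity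
    intro c u u' v
    refine ext3 _ _ ?_ ?_ ?_
    · simp [hbr1, add_lie, smul_lie]
    · intro t
      simp [hbr2, LinearMap.add_apply, LinearMap.smul_apply, smul_eq_mul]
      ring
    · simp [hbr3]; module
  · -- right bilinearity
    intro c u v v'
    refine ext3 _ _ ?_ ?_ ?_
    · simp [hbr1, lie_add, lie_smul]
    · intro t
      simp [hbr2, LinearMap.add_apply, LinearMap.smul_apply, smul_eq_mul]
      ring
    · simp [hbr3]; module
  · -- super-antisymmetry (even-any)
    intro u v h
    refine ext3 _ _ ?_ ?_ ?_
    · simp only [Prod.fst_neg, hbr1]; exact (lie_skew u.1 v.1).symm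
    · intro t
      simp only [hbr2, Prod.fst_neg, Prod.snd_neg, LinearMap.neg_apply]
      rcases h with h | h <;> simp [h]
    · simp only [Prod.snd_neg, hbr3]; module
  · -- symmetry (odd-odd)
    rintro u v ⟨hu1, hu2⟩ ⟨hv1, hv2⟩
    refine ext3 _ _ ?_ ?_ ?_
    · simp [hbr1, hu1, hv1]
    · intro t
      simp [hbr2, hu1, hu2, hv1, hv2, Bsym]
    · simp [hbr3, hu1, hv1]
  · -- Jacobi, one of u v even
    intro u v w h
    refine ext3 _ _ ?_ ?_ ?_
    · simp only [hbr1, Prod.fst_add, lie_lie]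
      abel
    · intro t
      simp only [hbr2, hbr1, hbr3, Prod.snd_add, Prod.fst_add, LinearMap.add_apply,
        hψ, LinearMap.sub_apply, Module.End.mul_apply, map_sub, map_add, map_neg,
        lie_lie, LinearMap.map_sub]
      rcases h with h | h <;> simp only [h, map_zero, LinearMap.zero_apply,
        LinearMap.map_zero] <;>
      · simp only [hskew]
        ring
    · simp only [hbr3, hbr1, Prod.snd_add, Prod.fst_add, hψ, LinearMap.sub_apply,
        Module.End.mul_apply, map_sub, map_add]
      module
  · -- Jacobi, u v odd
    rintro u v w ⟨hu1, hu2⟩ ⟨hv1, hv2⟩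
    refine ext3 _ _ ?_ ?_ ?_
    · simp [hbr1, hu1, hv1]
    · intro t
      simp only [hbr2, hbr1, hbr3, Prod.snd_sub, Prod.fst_sub, LinearMap.sub_apply,
        hψ, Module.End.mul_apply, map_sub, map_add, map_neg, lie_lie,
        hu1, hu2, hv1, hv2, map_zero, LinearMap.zero_apply, zero_lie, lie_zero]
      simp only [hskew]
      linear_combination hskew t v.2.2 ((ψ w.1) u.2.2) -
        hskew w.1 ((ψ t) v.2.2) u.2.2 + halt ((ψ w.1) ((ψ t) v.2.2)) u.2.2
    · simp [hbr3, hbr1, hu1, hv1, map_zero]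
  · -- Bb even
    rintro u v hu ⟨hv1, hv2⟩
    constructor <;> simp [hBb, hu, hv1, hv2]
  · -- supersymmetric (even part)
    intro u v h
    rcases h with h | h <;> simp [hBb, h] <;> ring
  · -- antisymmetric on odd
    rintro u v ⟨hu1, hu2⟩ ⟨hv1, hv2⟩
    simp [hBb, hu1, hu2, hv1, hv2, halt u.2.2 v.2.2]
  · -- nondegenerate
    intro u h
    have hf : u.2.1 = 0 := by
      apply LinearMap.ext
      intro Y
      have := h (Y, 0, 0)
      simpa [hBb] using this
    have hF : u.2.2 = 0 := by
      apply hBhnondeg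
      intro G
      have := h (0, 0, G)
      simpa [hBb] using this
    have hX : u.1 = 0 := by
      rw [← Module.forall_dual_apply_eq_zero_iff ℂ]
      intro g
      have := h (0, g, 0)
      simpa [hBb] using this
    refine ext3 _ _ hX ?_ hF
    intro t; simp [hf]
  · -- invariant
    intro u v w
    simp only [hBb, hbr1, hbr2, hbr3, map_sub, LinearMap.sub_apply]
    rw [← lie_skew v.1 u.1, ← lie_skew w.1 u.1]
    simp only [map_neg, hskew, halt u.2.2 (ψ v.1 w.2.2)]
    ring
end

section
/- Let g be a Lie algebra and φ : g* × g* → g a symmetric bilinear map satisfying: (1) ad(X)(φ(f,g)) + φ(f, g∘ad(X)) + φ(g, f∘ad(X)) = 0 for all X ∈ g, f,g ∈ g*; and (2) f∘ad(φ(g,h)) + g∘ad(φ(h,f)) + h∘ad(φ(f,g)) = 0 for all f,g,h ∈ g*. Then the ℤ₂-graded space ḡ = g ⊕ g* (with even part g and odd part g*) with bracket [X+f, Y+g] = [X,Y] + ad*(X)(g) − ad*(Y)(f) + φ(f,g) is a Lie superalgebra. -/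
/-- The `T_s*`-extension: for a Lie algebra `g` and a symmetric bilinear
map `φ : g* × g* → g` satisfying conditions (1) and (2), the ℤ₂-graded space
`ḡ = g ⊕ g*` (even part `g`, encoded `(X, 0)`; odd part `g*`, encoded `(0, f)`) with
bracket `[X+f, Y+g] = [X,Y] + ad*(X)(g) − ad*(Y)(f) + φ(f,g)` is a Lie superalgebra. -/
theorem stmt_17 (L : Type*) [LieRing L] [LieAlgebra ℂ L] [FiniteDimensional ℂ L]
    (φ : Module.Dual ℂ L → Module.Dual ℂ L → L)
    (hφsymm : ∀ f g, φ f g = φ g f)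
    (hφlin : ∀ (a : ℂ) (f f' g), φ (a • f + f') g = a • φ f g + φ f' g)
    (h1 : ∀ (X : L) (f g : Module.Dual ℂ L),
      ⁅X, φ f g⁆ + φ f (g.comp (LieAlgebra.ad ℂ L X)) +
        φ g (f.comp (LieAlgebra.ad ℂ L X)) = 0)
    (h2 : ∀ (f g h : Module.Dual ℂ L) (w : L),
      f ⁅φ g h, w⁆ + g ⁅φ h f, w⁆ + h ⁅φ f g, w⁆ = 0)
    (br : L × Module.Dual ℂ L → L × Module.Dual ℂ L → L × Module.Dual ℂ L)
    (hbr1 : ∀ u v, (br u v).1 = ⁅u.1, v.1⁆ + φ u.2 v.2)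
    (hbr2 : ∀ u v (w : L), (br u v).2 w = - v.2 ⁅u.1, w⁆ + u.2 ⁅v.1, w⁆) :
    -- the bracket is bilinear
    (∀ (c : ℂ) (u u' v), br (c • u + u') v = c • br u v + br u' v) ∧
    (∀ (c : ℂ) (u v v'), br u (c • v + v') = c • br u v + br u v') ∧
    -- super-antisymmetry
    (∀ u v, (u.2 = 0 ∨ v.2 = 0) → br u v = - br v u) ∧
    (∀ u v, u.1 = 0 → v.1 = 0 → br u v = br v u) ∧
    -- super Jacobi identity (graded Leibniz form)
    (∀ u v w, (u.2 = 0 ∨ v.2 = 0) → br u (br v w) = br (br u v) w + br v (br u w)) ∧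
    (∀ u v w, u.1 = 0 → v.1 = 0 → br u (br v w) = br (br u v) w - br v (br u w)) := by
  -- basic linearity facts for φ
  have hφ0 : ∀ g, φ 0 g = 0 := by
    intro g
    have := hφlin 1 0 0 g
    simp only [one_smul, add_zero] at this
    exact (left_eq_add.mp this)
  have hφ0' : ∀ f, φ f 0 = 0 := fun f => by rw [hφsymm]; exact hφ0 f
  have hφadd : ∀ f f' g, φ (f + f') g = φ f g + φ f' g := by
    intro f f' g
    have := hφlin 1 f f' g
    simpa using this
  have hφsmul : ∀ (a : ℂ) f g, φ (a • f) g = a • φ f g := by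
    intro a f g
    have := hφlin a f 0 g
    simpa [hφ0] using this
  have hφneg : ∀ f g, φ (-f) g = - φ f g := by
    intro f g
    have := hφsmul (-1) f g
    simpa using this
  have hφsub : ∀ f f' g, φ (f - f') g = φ f g - φ f' g := by
    intro f f' g
    rw [sub_eq_add_neg, hφadd, hφneg, sub_eq_add_neg]
  have hφsub' : ∀ f g g', φ f (g - g') = φ f g - φ f g' := by
    intro f g g'
    rw [hφsymm, hφsub, hφsymm g f, hφsymm g' f]
  have hφadd' : ∀ f g g', φ f (g + g') = φ f g + φ f g' := by
    intro f g g'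
    rw [hφsymm, hφadd, hφsymm g f, hφsymm g' f]
  have hφsmul' : ∀ (a : ℂ) f g, φ f (a • g) = a • φ f g := by
    intro a f g
    rw [hφsymm, hφsmul, hφsymm g f]
  have hφneg' : ∀ f g, φ f (-g) = - φ f g := by
    intro f g
    rw [hφsymm, hφneg, hφsymm g f]
  -- extensionality
  have hext : ∀ u v : L × Module.Dual ℂ L, u.1 = v.1 → (∀ w, u.2 w = v.2 w) → u = v :=
    fun u v h h' => Prod.ext h (LinearMap.ext h')
  -- the second component of a bracket, as an explicit linear map
  have hbr2' : ∀ u v, (br u v).2 =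
      u.2.comp (LieAlgebra.ad ℂ L v.1) - v.2.comp (LieAlgebra.ad ℂ L u.1) := by
    intro u v
    apply LinearMap.ext
    intro w
    simp only [hbr2, LinearMap.sub_apply, LinearMap.comp_apply, LieAlgebra.ad_apply]
    ring
  refine ⟨?_, ?_, ?_, ?_, ?_, ?_⟩
  · -- left bilinearity
    intro c u u' v
    apply hext
    · simp only [hbr1, Prod.fst_add, Prod.smul_fst, Prod.snd_add, Prod.smul_snd,
        Prod.smul_def, add_lie, smul_lie, hφlin]
      module
    · intro w
      simp only [hbr2, Prod.fst_add, Prod.smul_fst, Prod.snd_add, Prod.smul_snd,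
        Prod.smul_def, LinearMap.add_apply, LinearMap.smul_apply, add_lie, smul_lie,
        map_add, map_smul, smul_eq_mul]
      ring
  · -- right bilinearity
    intro c u v v'
    apply hext
    · simp only [hbr1, Prod.fst_add, Prod.smul_fst, Prod.snd_add, Prod.smul_snd,
        Prod.smul_def, lie_add, lie_smul, hφadd', hφsmul']
      module
    · intro w
      simp only [hbr2, Prod.fst_add, Prod.smul_fst, Prod.snd_add, Prod.smul_snd,
        Prod.smul_def, LinearMap.add_apply, LinearMap.smul_apply, add_lie, smul_lie,
        map_add, map_smul, smul_eq_mul]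
      ring
  · -- super-antisymmetry, mixed
    intro u v hc
    apply hext
    · simp only [hbr1, Prod.fst_neg, neg_add_rev]
      rcases hc with h | h <;> rw [h] <;>
        simp only [hφ0, hφ0', add_zero, neg_zero, zero_add, neg_add_rev] <;>
        rw [← lie_skew]
    · intro w
      simp only [hbr2, Prod.snd_neg, LinearMap.neg_apply]
      ring
  · -- symmetry on odd part
    intro u v hu hv
    apply hext
    · simp only [hbr1, hu, hv, zero_lie, lie_zero, hφsymm u.2 v.2]
    · intro w
      simp [hbr2, hu, hv]
  · -- super Jacobi, even argument
    rintro ⟨X, f⟩ ⟨Y, g⟩ ⟨Z, h⟩ hc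
    simp only at hc
    apply hext
    · simp only [hbr1, hbr2', Prod.fst_add, Prod.snd_add, lie_add, add_lie,
        hφsub, hφsub', hφadd, hφadd']
      rcases hc with rfl | rfl <;>
        simp only [hφ0, hφ0', LinearMap.zero_comp, hφsub, hφsub', sub_zero, zero_sub,
          hφneg, hφneg', add_zero, zero_add, lie_zero, zero_lie]
      · linear_combination (norm := module) (h1 X g h) + (leibniz_lie X Y Z) +
          (hφsymm (g.comp (LieAlgebra.ad ℂ L X)) h)
      · linear_combination (norm := module) (-(h1 Y f h)) + (leibniz_lie X Y Z) -
          (hφsymm (f.comp (LieAlgebra.ad ℂ L Y)) h)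
    · intro t
      simp only [hbr2, hbr1, Prod.fst_add, Prod.snd_add, LinearMap.add_apply,
        add_lie, lie_add, map_add, map_neg, neg_neg]
      rcases hc with rfl | rfl <;>
        simp only [LinearMap.zero_apply, neg_zero, add_zero, zero_add, hφ0, hφ0',
          zero_lie, lie_zero, map_zero] <;>
      · simp only [lie_lie, map_sub]
        ring
  · -- super Jacobi, odd arguments
    rintro ⟨X, f⟩ ⟨Y, g⟩ ⟨Z, h⟩ hu hv
    simp only at hu hv
    subst hu hv
    apply hext
    · simp only [hbr1, hbr2', Prod.fst_add, Prod.fst_sub, Prod.snd_add, Prod.snd_sub,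
        map_zero, LinearMap.comp_zero, zero_lie, lie_zero, zero_add, add_zero,
        hφsub, hφsub', sub_zero]
      have hz : (LieAlgebra.ad ℂ L) (0 : L) = 0 := (LieAlgebra.ad ℂ L).map_zero
      simp only [hz, LinearMap.comp_zero, hφsub, hφsub', sub_zero, hφ0, hφ0',
        sub_self, zero_lie, lie_zero, zero_add, add_zero, zero_sub, hφneg, hφneg']
      linear_combination (norm := module) (h1 Z f g) + (lie_skew (φ f g) Z)
    · intro t
      simp only [hbr2, hbr1, Prod.fst_add, Prod.fst_sub, Prod.snd_add, Prod.snd_sub,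
        LinearMap.sub_apply, zero_lie, lie_zero, map_zero, neg_zero, add_zero,
        zero_add, map_add, map_neg, map_sub]
      linear_combination (h2 f g h t) - congrArg (fun x => g ⁅x, t⁆) (hφsymm h f)
end

section
/- In the setting of the T_s*-extension: let g be a Lie algebra and φ : g* × g* → g a symmetric bilinear map satisfying conditions (1) and (2) above, and additionally the cyclic condition h(φ(f,g)) = f(φ(g,h)) for all f,g,h ∈ g*. Then the odd bilinear form B̄ on ḡ = g ⊕ g* defined by B̄(X+f, Y+g) = f(Y) + g(X) is non-degenerate, supersymmetric, and invariant, so (ḡ, B̄) is an odd quadratic Lie superalgebra. -/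
/-!
Identifying `ḡ = g ⊕ g*` with `L × Module.Dual ℂ L`, the form is the symmetrized evaluation
pairing, so oddness and supersymmetry are immediate, and non-degeneracy holds because the dual
of a vector space separates points. Invariance reduces, after cancelling the `g`-parts with
the skew-symmetry of the bracket, to `w(φ(u, v)) = u(φ(v, w))`, which is the cyclic condition.
-/

open Module

section OddPairing

variable {R M : Type*} [CommRing R] [AddCommGroup M] [Module R M]

def oddPairing (u v : M × Dual R M) : R := u.2 v.1 + v.2 u.1

theorem oddPairing_comm (u v : M × Dual R M) : oddPairing u v = oddPairing v u :=
  add_comm _ _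

theorem oddPairing_of_snd_eq_zero {u v : M × Dual R M} (hu : u.2 = 0) (hv : v.2 = 0) :
    oddPairing u v = 0 := by
  simp [oddPairing, hu, hv]

theorem oddPairing_of_fst_eq_zero {u v : M × Dual R M} (hu : u.1 = 0) (hv : v.1 = 0) :
    oddPairing u v = 0 := by
  simp [oddPairing, hu, hv]

theorem eq_zero_of_forall_oddPairing_eq_zero [Projective R M] {u : M × Dual R M}
    (hu : ∀ v, oddPairing u v = 0) : u = 0 := by
  have hfst : u.1 = 0 :=
    (forall_dual_apply_eq_zero_iff R u.1).mp fun f => by simpa [oddPairing] using hu (0, f)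
  have hsnd : u.2 = 0 := LinearMap.ext fun x => by simpa [oddPairing] using hu (x, 0)
  exact Prod.ext hfst hsnd

end OddPairing

section TsExtension

variable {R L : Type*} [CommRing R] [LieRing L] [LieAlgebra R L]

def tsExtBracket (φ : Dual R L → Dual R L → L) (u v : L × Dual R L) : L × Dual R L :=
  (⁅u.1, v.1⁆ + φ u.2 v.2,
    -(v.2.comp (LieAlgebra.ad R L u.1)) + u.2.comp (LieAlgebra.ad R L v.1))

theorem oddPairing_tsExtBracket (φ : Dual R L → Dual R L → L)
    (hcyclic : ∀ f g h : Dual R L, h (φ f g) = f (φ g h)) (u v w : L × Dual R L) :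
    oddPairing (tsExtBracket φ u v) w = oddPairing u (tsExtBracket φ v w) := by
  have hv : v.2 ⁅w.1, u.1⁆ = -v.2 ⁅u.1, w.1⁆ := by rw [← lie_skew, map_neg]
  have hw : w.2 ⁅u.1, v.1⁆ = -w.2 ⁅v.1, u.1⁆ := by rw [← lie_skew, map_neg]
  simp only [oddPairing, tsExtBracket, LinearMap.add_apply, LinearMap.neg_apply,
    LinearMap.comp_apply, LieAlgebra.ad_apply, map_add]
  rw [hv, hw, hcyclic]
  ring

end TsExtension

theorem stmt_18_general (L : Type*) [LieRing L] [LieAlgebra ℂ L]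
    (φ : Module.Dual ℂ L → Module.Dual ℂ L → L)
    (hcyclic : ∀ f g h : Module.Dual ℂ L, h (φ f g) = f (φ g h))
    (br : L × Module.Dual ℂ L → L × Module.Dual ℂ L → L × Module.Dual ℂ L)
    (hbr1 : ∀ u v, (br u v).1 = ⁅u.1, v.1⁆ + φ u.2 v.2)
    (hbr2 : ∀ u v (w : L), (br u v).2 w = - v.2 ⁅u.1, w⁆ + u.2 ⁅v.1, w⁆)
    (Bb : L × Module.Dual ℂ L → L × Module.Dual ℂ L → ℂ)
    (hBb : ∀ u v, Bb u v = u.2 v.1 + v.2 u.1) :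
    -- B̄ is odd: it vanishes on even × even and on odd × odd
    (∀ u v, u.2 = 0 → v.2 = 0 → Bb u v = 0) ∧
    (∀ u v, u.1 = 0 → v.1 = 0 → Bb u v = 0) ∧
    -- supersymmetric
    (∀ u v, (u.2 = 0 ∨ v.2 = 0) → Bb u v = Bb v u) ∧
    (∀ u v, u.1 = 0 → v.1 = 0 → Bb u v = - Bb v u) ∧
    -- non-degenerate
    (∀ u, (∀ v, Bb u v = 0) → u = 0) ∧
    -- invariant
    (∀ u v w, Bb (br u v) w = Bb u (br v w)) := by
  obtain rfl : Bb = oddPairing := funext₂ hBb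
  obtain rfl : br = tsExtBracket φ := funext₂ fun u v =>
    Prod.ext (hbr1 u v) (LinearMap.ext (hbr2 u v))
  refine ⟨fun _ _ => oddPairing_of_snd_eq_zero, fun _ _ => oddPairing_of_fst_eq_zero,
    fun u v _ => oddPairing_comm u v, fun u v hu hv => ?_,
    fun _ => eq_zero_of_forall_oddPairing_eq_zero, oddPairing_tsExtBracket φ hcyclic⟩
  rw [oddPairing_of_fst_eq_zero hu hv, oddPairing_of_fst_eq_zero hv hu, neg_zero]

/-- If the symmetric bilinear map `φ` of the `T_s*`-extension moreover
satisfies the cyclic condition `h(φ(f,g)) = f(φ(g,h))`, then the odd bilinear form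
`B̄(X+f, Y+g) = f(Y) + g(X)` on `ḡ = g ⊕ g*` is non-degenerate, supersymmetric and
invariant, so `(ḡ, B̄)` is an odd quadratic Lie superalgebra.  Elements are encoded as
pairs `(X, f)`; `(X, 0)` is even and `(0, f)` is odd. -/
theorem stmt_18 (L : Type*) [LieRing L] [LieAlgebra ℂ L] [FiniteDimensional ℂ L]
    (φ : Module.Dual ℂ L → Module.Dual ℂ L → L)
    (hφsymm : ∀ f g, φ f g = φ g f)
    (hφlin : ∀ (a : ℂ) (f f' g), φ (a • f + f') g = a • φ f g + φ f' g)
    (h1 : ∀ (X : L) (f g : Module.Dual ℂ L),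
      ⁅X, φ f g⁆ + φ f (g.comp (LieAlgebra.ad ℂ L X)) +
        φ g (f.comp (LieAlgebra.ad ℂ L X)) = 0)
    (h2 : ∀ (f g h : Module.Dual ℂ L) (w : L),
      f ⁅φ g h, w⁆ + g ⁅φ h f, w⁆ + h ⁅φ f g, w⁆ = 0)
    (hcyclic : ∀ f g h : Module.Dual ℂ L, h (φ f g) = f (φ g h))
    (br : L × Module.Dual ℂ L → L × Module.Dual ℂ L → L × Module.Dual ℂ L)
    (hbr1 : ∀ u v, (br u v).1 = ⁅u.1, v.1⁆ + φ u.2 v.2)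
    (hbr2 : ∀ u v (w : L), (br u v).2 w = - v.2 ⁅u.1, w⁆ + u.2 ⁅v.1, w⁆)
    (Bb : L × Module.Dual ℂ L → L × Module.Dual ℂ L → ℂ)
    (hBb : ∀ u v, Bb u v = u.2 v.1 + v.2 u.1) :
    -- B̄ is odd: it vanishes on even × even and on odd × odd
    (∀ u v, u.2 = 0 → v.2 = 0 → Bb u v = 0) ∧
    (∀ u v, u.1 = 0 → v.1 = 0 → Bb u v = 0) ∧
    -- supersymmetric
    (∀ u v, (u.2 = 0 ∨ v.2 = 0) → Bb u v = Bb v u) ∧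
    (∀ u v, u.1 = 0 → v.1 = 0 → Bb u v = - Bb v u) ∧
    -- non-degenerate
    (∀ u, (∀ v, Bb u v = 0) → u = 0) ∧
    -- invariant
    (∀ u v w, Bb (br u v) w = Bb u (br v w)) :=
  stmt_18_general L φ hcyclic br hbr1 hbr2 Bb hBb
end
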